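/- ∑_{k=0}^∞ (10k − 1)/C(4k,2k) = 4√3·π/27. -/

import Mathlib

/-!
By the Beta integral, `C(4k,2k)⁻¹ = (4k+1) ∫₀¹ (x(1-x))^(2k) dx`, so with `t = (x(1-x))²` the series is
`∫₀¹ ∑ₖ (10k-1)(4k+1) tᵏ dx`. Writing `(10k-1)(4k+1) = 40k² + 6k - 1` in the basis `C(k+j, j)`
sums the inner series to `(33t² + 48t - 1)/(1-t)³`. In the variable `u = x(1-x)` this has the
antiderivative `(2x-1) u (5 + 16u - u²) / (3(1-u²)²) + (4√3/9) arctan((2x-1)/√3)`, whose rational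
part vanishes at `0` and `1`, leaving `(4√3/9)(π/6 + π/6)`.
-/

open Real intervalIntegral
open scoped Nat

theorem integral_pow_mul_one_sub_pow (a b : ℕ) :
    ∫ x in (0 : ℝ)..1, x ^ a * (1 - x) ^ b = (a ! * b ! : ℝ) / (a + b + 1)! := by
  have h := Complex.betaIntegral_eq_Gamma_mul_div (a + 1) (b + 1)
    (by norm_cast; omega) (by norm_cast; omega)
  rw [show (a + 1 : ℂ) + (b + 1) = ((a + b + 1 : ℕ) : ℂ) + 1 by push_cast; ring,
    Complex.Gamma_nat_eq_factorial, Complex.Gamma_nat_eq_factorial,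
    Complex.Gamma_nat_eq_factorial, Complex.betaIntegral] at h
  simp only [add_sub_cancel_right, Complex.cpow_natCast] at h
  apply Complex.ofReal_injective
  rw [← intervalIntegral.integral_ofReal]
  push_cast
  exact h

theorem integral_pow_mul_one_sub_pow_eq_inv_choose (a b : ℕ) :
    ∫ x in (0 : ℝ)..1, x ^ a * (1 - x) ^ b = ((a + b + 1) * (a + b).choose a : ℝ)⁻¹ := by
  rw [integral_pow_mul_one_sub_pow, Nat.factorial_succ,
    ← Nat.choose_mul_factorial_mul_factorial (Nat.le_add_right a b), Nat.add_sub_cancel_left]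
  push_cast
  field_simp

theorem div_choose_eq_integral (k : ℕ) :
    (10 * (k : ℝ) - 1) / (4 * k).choose (2 * k) =
      ∫ x in (0 : ℝ)..1, (40 * k ^ 2 + 6 * k - 1) * ((x * (1 - x)) ^ 2) ^ k := by
  simp_rw [← pow_mul, mul_pow, integral_const_mul, integral_pow_mul_one_sub_pow_eq_inv_choose,
    ← two_mul, ← mul_assoc]
  push_cast
  have : (0 : ℝ) < (4 * k).choose (2 * k) := Nat.cast_pos.2 (Nat.choose_pos (by omega))
  field_simp
  ring

theorem hasSum_quadratic_mul_pow_two_pow {u : ℝ} (hu : u ^ 2 < 1) :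
    HasSum (fun k : ℕ => (40 * k ^ 2 + 6 * k - 1) * (u ^ 2) ^ k)
      ((33 * u ^ 4 + 48 * u ^ 2 - 1) / (1 - u ^ 2) ^ 3) := by
  have hr : ‖u ^ 2‖ < 1 := by rwa [Real.norm_of_nonneg (sq_nonneg u)]
  -- `40k² + 6k - 1 = 80 C(k+2, 2) - 114 C(k+1, 1) + 33 C(k, 0)`
  have H := ((hasSum_choose_mul_geometric_of_norm_lt_one 2 hr).mul_left 80).sub
    ((hasSum_choose_mul_geometric_of_norm_lt_one 1 hr).mul_left 114) |>.add
    ((hasSum_choose_mul_geometric_of_norm_lt_one 0 hr).mul_left 33)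
  have hD : 1 - u ^ 2 ≠ 0 := (sub_pos.2 hu).ne'
  rw [show (33 * u ^ 4 + 48 * u ^ 2 - 1) / (1 - u ^ 2) ^ 3 =
    80 * (1 / (1 - u ^ 2) ^ (2 + 1)) - 114 * (1 / (1 - u ^ 2) ^ (1 + 1)) +
      33 * (1 / (1 - u ^ 2) ^ (0 + 1)) by field_simp; ring]
  refine H.congr_fun fun k => ?_
  rw [Nat.cast_choose_two, Nat.choose_one_right, Nat.choose_zero_right]
  push_cast
  ring

theorem hasSum_intervalIntegral_mul_pow {c : ℕ → ℝ} {f g : ℝ → ℝ} {a b ρ : ℝ}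
    (hf : Continuous f) (hfρ : ∀ x ∈ Set.uIcc a b, |f x| ≤ ρ)
    (hc : Summable fun k => |c k| * ρ ^ k)
    (hg : ∀ x ∈ Set.uIcc a b, HasSum (fun k => c k * f x ^ k) (g x)) :
    HasSum (fun k => ∫ x in a..b, c k * f x ^ k) (∫ x in a..b, g x) := by
  refine hasSum_integral_of_dominated_convergence (fun k _ => |c k| * ρ ^ k)
    (fun k => (continuous_const.mul (hf.pow k)).aestronglyMeasurable)
    (fun k => .of_forall fun x hx => ?_) (.of_forall fun _ _ => hc)
    intervalIntegrable_const (.of_forall fun x hx => hg x (Set.uIoc_subset_uIcc hx))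
  rw [Real.norm_eq_abs, abs_mul, abs_pow]
  exact mul_le_mul_of_nonneg_left
    (pow_le_pow_left₀ (abs_nonneg _) (hfρ x (Set.uIoc_subset_uIcc hx)) k) (abs_nonneg _)

theorem sq_mul_one_sub_le {x : ℝ} (hx : x ∈ Set.uIcc (0 : ℝ) 1) :
    (x * (1 - x)) ^ 2 ≤ (1 / 4) ^ 2 := by
  rw [Set.uIcc_of_le zero_le_one] at hx
  exact pow_le_pow_left₀ (mul_nonneg hx.1 (sub_nonneg.2 hx.2))
    (by nlinarith [sq_nonneg (x - 1 / 2)]) 2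

theorem one_sub_mul_one_sub_pos (x : ℝ) : 0 < 1 - x * (1 - x) := by
  nlinarith [sq_nonneg (x - 1 / 2)]

theorem hasDerivAt_arctan_two_mul_sub_one_div_sqrt_three (x : ℝ) :
    HasDerivAt (fun x => 4 * √3 / 9 * arctan ((2 * x - 1) / √3))
      (2 / (3 * (1 - x * (1 - x)))) x := by
  have h := ((((hasDerivAt_id' x).const_mul 2).sub_const 1).div_const √3).arctan.const_mul
    (4 * √3 / 9)
  refine h.congr_deriv ?_
  have h3 : √3 ^ 2 = 3 := sq_sqrt (by norm_num)
  have hq := one_sub_mul_one_sub_pos x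
  field_simp
  rw [h3]
  ring

theorem hasDerivAt_rational_add_arctan {x : ℝ} (hx : x ∈ Set.uIcc (0 : ℝ) 1) :
    HasDerivAt (fun x => (2 * x - 1) * (x * (1 - x)) * (5 + 16 * (x * (1 - x)) - (x * (1 - x)) ^ 2)
        / (3 * (1 - (x * (1 - x)) ^ 2) ^ 2) + 4 * √3 / 9 * arctan ((2 * x - 1) / √3))
      ((33 * (x * (1 - x)) ^ 4 + 48 * (x * (1 - x)) ^ 2 - 1) / (1 - (x * (1 - x)) ^ 2) ^ 3) x := by
  have hu : HasDerivAt (fun x : ℝ => x * (1 - x)) (1 - 2 * x) x :=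
    (hasDerivAt_id' x |>.fun_mul (hasDerivAt_id' x |>.const_sub 1)).congr_deriv (by ring)
  have hlin : HasDerivAt (fun x : ℝ => 2 * x - 1) 2 x := by
    simpa using ((hasDerivAt_id' x).const_mul 2).sub_const 1
  have hnum := (hlin.fun_mul hu).fun_mul (((hu.const_mul 16).const_add 5).fun_sub (hu.fun_pow 2))
  have hden := ((hu.fun_pow 2).const_sub 1).fun_pow 2 |>.const_mul 3
  have hD : 1 - (x * (1 - x)) ^ 2 ≠ 0 := by nlinarith [sq_mul_one_sub_le hx]
  have hD' : 1 - x ^ 2 * (1 - x) ^ 2 ≠ 0 := by rwa [← mul_pow]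
  have hq := (one_sub_mul_one_sub_pos x).ne'
  refine ((hnum.div hden (by simp [hD])).add
    (hasDerivAt_arctan_two_mul_sub_one_div_sqrt_three x)).congr_deriv ?_
  simp only [Nat.cast_ofNat, Nat.add_one_sub_one, pow_one]
  field_simp
  ring

theorem integral_rational_of_mul_one_sub :
    ∫ x in (0 : ℝ)..1,
        (33 * (x * (1 - x)) ^ 4 + 48 * (x * (1 - x)) ^ 2 - 1) / (1 - (x * (1 - x)) ^ 2) ^ 3 =
      4 * √3 * π / 27 := by
  have hD : ∀ x ∈ Set.uIcc (0 : ℝ) 1, (1 - (x * (1 - x)) ^ 2) ^ 3 ≠ 0 := fun x hx =>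
    pow_ne_zero 3 (by nlinarith [sq_mul_one_sub_le hx])
  rw [integral_eq_sub_of_hasDerivAt (fun x hx => hasDerivAt_rational_add_arctan hx)
    ((ContinuousOn.div (by fun_prop) (by fun_prop) hD).intervalIntegrable)]
  norm_num [neg_div, arctan_neg, arctan_inv_sqrt_three]
  ring

theorem stmt_13 :
    ∑' k : ℕ, (10 * (k : ℝ) - 1) / (Nat.choose (4 * k) (2 * k) : ℝ) =
      4 * Real.sqrt 3 * Real.pi / 27 := by
  have hbound : ∀ x ∈ Set.uIcc (0 : ℝ) 1, |(x * (1 - x)) ^ 2| ≤ (1 / 4) ^ 2 := fun x hx => by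
    rw [abs_of_nonneg (sq_nonneg _)]
    exact sq_mul_one_sub_le hx
  have hc : Summable fun k : ℕ => |40 * (k : ℝ) ^ 2 + 6 * k - 1| * ((1 / 4) ^ 2) ^ k := by
    refine (hasSum_quadratic_mul_pow_two_pow (u := 1 / 4) (by norm_num)).summable.abs.congr
      fun k => ?_
    rw [abs_mul, abs_of_nonneg (pow_nonneg (sq_nonneg (1 / 4 : ℝ)) k)]
  have h := hasSum_intervalIntegral_mul_pow (by fun_prop) hbound hc fun x hx =>
    hasSum_quadratic_mul_pow_two_pow ((sq_mul_one_sub_le hx).trans_lt (by norm_num))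
  rw [integral_rational_of_mul_one_sub] at h
  simpa only [div_choose_eq_integral] using h.tsum_eq
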